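/- Let T > 0, η ≥ 0, λ, σ > 0 and x₀ > 0. Let (Ω, F, P) be a probability space carrying a standard Brownian motion W : [0,T] × Ω → ℝ with continuous sample paths. For each N ∈ ℕ (N ≥ 1) define the Euler approximation Y^N_0 := x₀ and Y^N_{k+1} := Y^N_k + (T/N)·((η + σ²/2)·Y^N_k − λ·(Y^N_k)³) + σ·Y^N_k·(W_{(k+1)T/N} − W_{kT/N}) for k = 0, 1, …, N−1. Then lim_{N → ∞} E[|Y^N_N|^p] = ∞ for every p ∈ [1, ∞). -/

import Mathlib

/-!
On the event that the first Brownian increment exceeds a multiple of `N` while all later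
increments lie in `[-1, 1]`, the first Euler step lands at a height of order `N`, where the cubic
drift overshoots so violently that every further step at least squares `|Y|`; hence
`|Y^N_N| ≥ 2 ^ 2 ^ (N - 1)` there. By independence and Gaussian tails this event has
probability at least `c ^ N * exp (-C N ^ 3)`, which the double exponential beats.
-/

open MeasureTheory ProbabilityTheory Filter

/-- `W` is a standard Brownian motion on the time interval `[0, T]` with
continuous sample paths: each `W t` is measurable, `W 0 = 0`, the sample paths
are continuous on `[0, T]`, the increment `W t - W s` is centered Gaussian with
variance `t - s` for `0 ≤ s ≤ t ≤ T`, and increments over disjoint consecutive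
time intervals are independent. -/
def IsStandardBrownianMotion {Ω : Type*} [MeasurableSpace Ω] (P : Measure Ω)
    (T : ℝ) (W : ℝ → Ω → ℝ) : Prop :=
  (∀ t, t ∈ Set.Icc 0 T → Measurable (W t)) ∧
  (∀ ω, W 0 ω = 0) ∧
  (∀ ω, ContinuousOn (fun t => W t ω) (Set.Icc 0 T)) ∧
  (∀ s t : ℝ, 0 ≤ s → s ≤ t → t ≤ T →
    Measure.map (fun ω => W t ω - W s ω) P = gaussianReal 0 (Real.toNNReal (t - s))) ∧
  (∀ (n : ℕ) (t : Fin (n + 1) → ℝ), Monotone t → (∀ i, t i ∈ Set.Icc 0 T) →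
    iIndepFun
      (fun (i : Fin n) => fun ω => W (t i.succ) ω - W (t i.castSucc) ω) P)

open Real
open scoped NNReal ENNReal

lemma tendsto_succ_pow_div_two_pow (k : ℕ) :
    Tendsto (fun m : ℕ => ((m : ℝ) + 1) ^ k / 2 ^ m) atTop (nhds 0) := by
  have h := ((tendsto_add_atTop_iff_nat 1).mpr
    (tendsto_pow_const_div_const_pow_of_one_lt k (one_lt_two (α := ℝ)))).const_mul 2
  rw [mul_zero] at h
  refine h.congr fun m => ?_
  push_cast
  rw [pow_succ]
  field_simp

lemma tendsto_two_pow_two_pow_mul_exp_neg_cube {c : ℝ} (hc : 0 < c) (C : ℝ) :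
    Tendsto (fun m : ℕ => (2 : ℝ) ^ 2 ^ m * (c ^ (m + 1) * exp (-C * ((m : ℝ) + 1) ^ 3)))
      atTop atTop := by
  have hrate : Tendsto (fun m : ℕ =>
      log 2 + (((m : ℝ) + 1) ^ 1 / 2 ^ m * log c - C * (((m : ℝ) + 1) ^ 3 / 2 ^ m)))
      atTop (nhds (log 2)) := by
    simpa using tendsto_const_nhds.add (((tendsto_succ_pow_div_two_pow 1).mul_const (log c)).sub
      ((tendsto_succ_pow_div_two_pow 3).const_mul C))
  refine (tendsto_exp_atTop.comp ((tendsto_pow_atTop_atTop_of_one_lt one_lt_two).atTop_mul_pos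
    (log_pos one_lt_two) hrate)).congr fun m => ?_
  have hpow : ∀ (n : ℕ) {x : ℝ}, 0 < x → x ^ n = exp (n * log x) := fun n x hx => by
    rw [exp_nat_mul, exp_log hx]
  have h2 : (2 : ℝ) ^ m ≠ 0 := by positivity
  rw [Function.comp_apply, hpow (2 ^ m) two_pos, hpow (m + 1) hc, ← exp_add, ← exp_add]
  congr 1
  push_cast
  field_simp
  ring

lemma ofReal_le_gaussianReal_Icc_add_sqrt {v : ℝ≥0} (hv : v ≠ 0) {a : ℝ} (ha : 0 ≤ a) :
    ENNReal.ofReal ((√(2 * π))⁻¹ * exp (-1 - a ^ 2 / v)) ≤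
      gaussianReal 0 v (Set.Icc a (a + √v)) := by
  have hv₀ : (0 : ℝ) < v := by positivity
  have hsqrt : √(v : ℝ) ^ 2 = v := sq_sqrt hv₀.le
  rw [gaussianReal_apply 0 hv]
  calc ENNReal.ofReal ((√(2 * π))⁻¹ * exp (-1 - a ^ 2 / v))
      = ∫⁻ _ in Set.Icc a (a + √v),
          ENNReal.ofReal ((√(2 * π * v))⁻¹ * exp (-1 - a ^ 2 / v)) := by
        rw [setLIntegral_const, volume_Icc, add_sub_cancel_left,
          ← ENNReal.ofReal_mul (by positivity)]
        congr 1
        rw [sqrt_mul (by positivity) v]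
        field_simp
    _ ≤ ∫⁻ x in Set.Icc a (a + √v), gaussianPDF 0 v x := by
        refine setLIntegral_mono' measurableSet_Icc fun x ⟨hax, hxa⟩ => ?_
        refine ENNReal.ofReal_le_ofReal
          (mul_le_mul_of_nonneg_left (exp_le_exp.mpr ?_) (by positivity))
        rw [sub_zero, show -1 - a ^ 2 / v = -(2 * v + 2 * a ^ 2) / (2 * v) by field_simp; ring]
        gcongr
        nlinarith [sq_nonneg (a - √v)]

noncomputable def gridIncrement {Ω : Type*} (W : ℝ → Ω → ℝ) (T : ℝ) (N k : ℕ) (ω : Ω) : ℝ :=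
  W (((k : ℝ) + 1) * T / N) ω - W ((k : ℝ) * T / N) ω

lemma natCast_mul_div_mem_Icc {T : ℝ} (hT : 0 ≤ T) {k N : ℕ} (hk : k ≤ N) :
    (k : ℝ) * T / N ∈ Set.Icc 0 T :=
  ⟨by positivity, by
    rw [mul_div_right_comm]
    exact mul_le_of_le_one_left hT (div_le_one_of_le₀ (by exact_mod_cast hk) N.cast_nonneg)⟩

namespace IsStandardBrownianMotion

variable {Ω : Type*} [MeasurableSpace Ω] {P : Measure Ω} {T : ℝ} {W : ℝ → Ω → ℝ}

lemma measurable_gridIncrement (hW : IsStandardBrownianMotion P T W) (hT : 0 ≤ T) {N k : ℕ}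
    (hk : k < N) : Measurable (gridIncrement W T N k) := by
  have hk₁ := natCast_mul_div_mem_Icc hT (Nat.succ_le_of_lt hk)
  push_cast at hk₁
  exact (hW.1 _ hk₁).sub (hW.1 _ (natCast_mul_div_mem_Icc hT hk.le))

lemma measure_iInter_gridIncrement_mem (hW : IsStandardBrownianMotion P T W) (hT : 0 ≤ T)
    (N : ℕ) {B : Fin N → Set ℝ} (hB : ∀ i, MeasurableSet (B i)) :
    P (⋂ i : Fin N, gridIncrement W T N i ⁻¹' B i) =
      ∏ i, gaussianReal 0 (T / N).toNNReal (B i) := by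
  set t : Fin (N + 1) → ℝ := fun i => i * T / N with ht_def
  have ht : ∀ i, t i ∈ Set.Icc 0 T := fun i => natCast_mul_div_mem_Icc hT i.is_le
  have hmono : Monotone t := fun i j hij => by
    simp only [ht_def]
    gcongr
    exact_mod_cast hij
  have hinc : (fun (i : Fin N) ω => W (t i.succ) ω - W (t i.castSucc) ω) =
      fun (i : Fin N) => gridIncrement W T N i := by
    ext i ω
    simp [ht_def, gridIncrement]
  have hlaw : ∀ i : Fin N, P.map (gridIncrement W T N i) = gaussianReal 0 (T / N).toNNReal := by
    intro i
    rw [← congrFun hinc i, hW.2.2.2.1 _ _ (ht _).1 (hmono i.castSucc_le_succ) (ht _).2]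
    congr 3
    simp only [ht_def, Fin.val_succ, Fin.val_castSucc]
    push_cast
    ring
  have hindep := hW.2.2.2.2 N t hmono ht
  rw [hinc] at hindep
  rw [hindep.meas_iInter fun i => ⟨B i, hB i, rfl⟩]
  refine Finset.prod_congr rfl fun i _ => ?_
  rw [← hlaw i, Measure.map_apply (hW.measurable_gridIncrement hT i.is_lt) (hB i)]

lemma prod_ofReal_le_measure_gridIncrement_mem_Icc (hW : IsStandardBrownianMotion P T W)
    (hT : 0 < T) {N : ℕ} (hN : N ≠ 0) {a : Fin N → ℝ} (ha : ∀ i, 0 ≤ a i) :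
    ∏ i, ENNReal.ofReal ((√(2 * π))⁻¹ * exp (-1 - a i ^ 2 * N / T)) ≤
      P (⋂ i : Fin N, gridIncrement W T N i ⁻¹' Set.Icc (a i) (a i + √(T / N))) := by
  have hv : (T / N).toNNReal ≠ 0 := by positivity
  rw [hW.measure_iInter_gridIncrement_mem hT.le N fun _ => measurableSet_Icc]
  gcongr with i
  simpa only [Real.coe_toNNReal _ (by positivity : 0 ≤ T / N), div_div_eq_mul_div] using
    ofReal_le_gaussianReal_Icc_add_sqrt hv (ha i)

end IsStandardBrownianMotion

lemma pow_two_pow_le_of_sq_le {z : ℕ → ℝ} {r : ℝ} (hr : 1 ≤ r) (h0 : r ≤ z 0) :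
    ∀ {n : ℕ}, (∀ k < n, r ≤ z k → z k ^ 2 ≤ z (k + 1)) → r ^ 2 ^ n ≤ z n
  | 0, _ => by simpa using h0
  | n + 1, hstep => by
    have ih : r ^ 2 ^ n ≤ z n := pow_two_pow_le_of_sq_le hr h0 fun k hk => hstep k (by omega)
    have hrz : r ≤ z n := (le_self_pow₀ hr (by positivity)).trans ih
    calc r ^ 2 ^ (n + 1) = (r ^ 2 ^ n) ^ 2 := by rw [pow_succ, pow_mul]
      _ ≤ z n ^ 2 := pow_le_pow_left₀ (by positivity) ih 2
      _ ≤ z (n + 1) := hstep n n.lt_succ_self hrz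

lemma sq_abs_le_abs_euler_step {v E lam σ y w r : ℝ} (hσ : 0 ≤ σ) (hvE : 0 ≤ v * E)
    (hw : |w| ≤ 1) (hr : 1 ≤ r) (hy : r ≤ |y|) (hrv : 2 + v * E + σ ≤ lam * v * r) :
    |y| ^ 2 ≤ |y + v * (E * y - lam * y ^ 3) + σ * y * w| := by
  have hlamv : 0 < lam * v := by nlinarith
  have hσw : σ * w ≤ σ := by nlinarith [le_abs_self w]
  have hgrowth : |y| ≤ lam * v * |y| ^ 2 - 1 - v * E - σ * w := by
    nlinarith [mul_le_mul_of_nonneg_left hy hlamv.le]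
  calc |y| ^ 2 = |y| * |y| := sq _
    _ ≤ |y| * (lam * v * y ^ 2 - (1 + v * E + σ * w)) := by
        gcongr; rw [← sq_abs y]; linarith
    _ ≤ |y| * |lam * v * y ^ 2 - (1 + v * E + σ * w)| := by gcongr; exact le_abs_self _
    _ = |y + v * (E * y - lam * y ^ 3) + σ * y * w| := by
        rw [← abs_mul, ← abs_neg]; ring_nf

lemma pow_two_pow_le_abs_euler {y w : ℕ → ℝ} {n : ℕ} {T v E lam σ x₀ r : ℝ}
    (hv : 0 ≤ v) (hvT : v ≤ T) (hE : 0 ≤ E) (hlam : 0 ≤ lam) (hσ : 0 ≤ σ) (hx₀ : 0 ≤ x₀)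
    (hr : 1 ≤ r) (hrv : 2 + T * E + σ ≤ lam * v * r) (h0 : y 0 = x₀)
    (hrec : ∀ k ≤ n, y (k + 1) = y k + v * (E * y k - lam * y k ^ 3) + σ * y k * w k)
    (hw₀ : r + T * lam * x₀ ^ 3 ≤ σ * x₀ * w 0)
    (hw : ∀ k, 1 ≤ k → k ≤ n → |w k| ≤ 1) :
    r ^ 2 ^ n ≤ |y (n + 1)| := by
  have hvE : v * E ≤ T * E := mul_le_mul_of_nonneg_right hvT hE
  have hfirst : r ≤ |y 1| := by
    have hcube : v * (lam * x₀ ^ 3) ≤ T * (lam * x₀ ^ 3) := by gcongr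
    rw [hrec 0 n.zero_le, h0]
    refine le_trans ?_ (le_abs_self _)
    nlinarith [mul_nonneg (mul_nonneg hv hE) hx₀]
  refine pow_two_pow_le_of_sq_le (z := fun k => |y (k + 1)|) hr hfirst fun k hk hyk => ?_
  rw [hrec (k + 1) hk]
  exact sq_abs_le_abs_euler_step hσ (mul_nonneg hv hE) (hw (k + 1) k.succ_pos hk) hr hyk
    (by linarith)

lemma two_pow_two_pow_le_abs_euler {y w : ℕ → ℝ} {m : ℕ} {T E lam σ x₀ κ : ℝ}
    (hT : 0 < T) (hE : 0 ≤ E) (hlam : 0 < lam) (hσ : 0 < σ) (hx₀ : 0 < x₀)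
    (hκ : 2 + (2 + T * E + σ) / (lam * T) + T * lam * x₀ ^ 3 ≤ σ * x₀ * κ) (h0 : y 0 = x₀)
    (hrec : ∀ k ≤ m, y (k + 1) =
      y k + T / ((m + 1 : ℕ) : ℝ) * (E * y k - lam * y k ^ 3) + σ * y k * w k)
    (hw₀ : κ * (m + 1) ≤ w 0) (hw : ∀ k, 1 ≤ k → k ≤ m → |w k| ≤ 1) :
    (2 : ℝ) ^ 2 ^ m ≤ |y (m + 1)| := by
  set ρ := 2 + (2 + T * E + σ) / (lam * T)
  have hρ : 2 ≤ ρ := le_add_of_nonneg_right (by positivity)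
  have hr : (2 : ℝ) ≤ ρ * (m + 1) := by nlinarith [(Nat.cast_nonneg m : (0 : ℝ) ≤ m)]
  have hrv : 2 + T * E + σ ≤ lam * (T / ((m + 1 : ℕ) : ℝ)) * (ρ * (m + 1)) := by
    have : lam * (T / ((m + 1 : ℕ) : ℝ)) * (ρ * (m + 1)) = 2 * lam * T + (2 + T * E + σ) := by
      simp only [ρ]; push_cast; field_simp
    nlinarith [mul_pos hlam hT]
  have hw₀' : ρ * (m + 1) + T * lam * x₀ ^ 3 ≤ σ * x₀ * w 0 := by
    nlinarith [mul_le_mul_of_nonneg_left hw₀ (by positivity : (0 : ℝ) ≤ σ * x₀),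
      mul_nonneg (by positivity : (0 : ℝ) ≤ T * lam * x₀ ^ 3) m.cast_nonneg]
  calc (2 : ℝ) ^ 2 ^ m ≤ (ρ * (m + 1)) ^ 2 ^ m := pow_le_pow_left₀ zero_le_two hr _
    _ ≤ |y (m + 1)| := pow_two_pow_le_abs_euler (by positivity) (div_le_self hT.le (by simp))
        hE hlam.le hσ.le hx₀.le (by linarith) hrv h0 hrec hw₀' hw

theorem ofReal_le_lintegral_abs_euler_rpow {Ω : Type*} [MeasurableSpace Ω] {P : Measure Ω}
    {T E lam σ x₀ κ p : ℝ} {W : ℝ → Ω → ℝ} {y : ℕ → Ω → ℝ} {m : ℕ}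
    (hW : IsStandardBrownianMotion P T W) (hT : 0 < T) (hE : 0 ≤ E) (hlam : 0 < lam)
    (hσ : 0 < σ) (hx₀ : 0 < x₀)
    (hκ : 2 + (2 + T * E + σ) / (lam * T) + T * lam * x₀ ^ 3 ≤ σ * x₀ * κ)
    (hp : 1 ≤ p) (hm : T ≤ m + 1) (hy0 : ∀ ω, y 0 ω = x₀)
    (hyrec : ∀ k < m + 1, ∀ ω, y (k + 1) ω = y k ω + T / ((m + 1 : ℕ) : ℝ) *
      (E * y k ω - lam * y k ω ^ 3) + σ * y k ω * gridIncrement W T (m + 1) k ω) :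
    ENNReal.ofReal ((2 : ℝ) ^ 2 ^ m * (((√(2 * π))⁻¹ * exp (-1)) ^ (m + 1) *
      exp (-(κ ^ 2 / T) * ((m : ℝ) + 1) ^ 3))) ≤
      ∫⁻ ω, ENNReal.ofReal (|y (m + 1) ω| ^ p) ∂P := by
  have hκ₀ : 0 ≤ κ :=
    nonneg_of_mul_nonneg_right (le_trans (by positivity) hκ) (by positivity : 0 < σ * x₀)
  set v := T / ((m + 1 : ℕ) : ℝ)
  set a : Fin (m + 1) → ℝ := fun i => if (i : ℕ) = 0 then κ * (m + 1) else 0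
  set A := ⋂ i : Fin (m + 1), gridIncrement W T (m + 1) i ⁻¹' Set.Icc (a i) (a i + √v)
  have hPA : ENNReal.ofReal (((√(2 * π))⁻¹ * exp (-1)) ^ (m + 1) *
      exp (-(κ ^ 2 / T) * ((m : ℝ) + 1) ^ 3)) ≤ P A := by
    refine le_trans (le_of_eq ?_) (hW.prod_ofReal_le_measure_gridIncrement_mem_Icc hT
      m.succ_ne_zero fun i => by positivity)
    rw [← ENNReal.ofReal_prod_of_nonneg fun i _ => by positivity]
    congr 1
    simp [a, Fin.prod_univ_succ, sub_eq_add_neg, exp_add, mul_pow]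
    ring_nf
  have hbig : ∀ ω ∈ A, (2 : ℝ) ^ 2 ^ m ≤ |y (m + 1) ω| ^ p := by
    intro ω hω
    have hmem := Set.mem_iInter.mp hω
    have hv₁ : v ≤ 1 := by rw [div_le_one (by positivity)]; exact_mod_cast hm
    have hw : ∀ k, 1 ≤ k → k ≤ m → |gridIncrement W T (m + 1) k ω| ≤ 1 := by
      intro k hk₁ hk
      have hwk := hmem ⟨k, by omega⟩
      simp only [a, show k ≠ 0 by omega, if_false, zero_add, Set.mem_preimage, Set.mem_Icc] at hwk
      exact abs_le.mpr ⟨by linarith, hwk.2.trans (sqrt_le_one.mpr hv₁)⟩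
    have hgrowth := two_pow_two_pow_le_abs_euler (y := fun k => y k ω) hT hE hlam hσ hx₀ hκ
      (hy0 ω) (fun k hk => hyrec k (Nat.lt_succ_of_le hk) ω) (by simpa [a] using (hmem 0).1) hw
    exact hgrowth.trans (self_le_rpow_of_one_le ((one_le_pow₀ one_le_two).trans hgrowth) hp)
  calc ENNReal.ofReal ((2 : ℝ) ^ 2 ^ m * (((√(2 * π))⁻¹ * exp (-1)) ^ (m + 1) *
        exp (-(κ ^ 2 / T) * ((m : ℝ) + 1) ^ 3)))
      ≤ ENNReal.ofReal ((2 : ℝ) ^ 2 ^ m) * P A := by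
        rw [ENNReal.ofReal_mul (by positivity)]
        gcongr
    _ = ∫⁻ _ in A, ENNReal.ofReal ((2 : ℝ) ^ 2 ^ m) ∂P := (setLIntegral_const _ _).symm
    _ ≤ ∫⁻ ω in A, ENNReal.ofReal (|y (m + 1) ω| ^ p) ∂P :=
        setLIntegral_mono' (MeasurableSet.iInter fun i =>
          hW.measurable_gridIncrement hT.le i.is_lt measurableSet_Icc)
          fun ω hω => ENNReal.ofReal_le_ofReal (hbig ω hω)
    _ ≤ ∫⁻ ω, ENNReal.ofReal (|y (m + 1) ω| ^ p) ∂P := setLIntegral_le_lintegral _ _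

theorem stmt_17_general {Ω : Type*} [MeasurableSpace Ω] (P : MeasureTheory.Measure Ω)
    (T : ℝ) (hT : 0 < T)
    (η lam σ : ℝ) (hη : 0 ≤ η) (hlam : 0 < lam) (hσ : 0 < σ) (x₀ : ℝ) (hx₀ : 0 < x₀)
    (W : ℝ → Ω → ℝ) (hW : IsStandardBrownianMotion P T W)
    (Y : ℕ → ℕ → Ω → ℝ)
    (hY0 : ∀ N, 1 ≤ N → ∀ ω, Y N 0 ω = x₀)
    (hYrec : ∀ N, 1 ≤ N → ∀ k < N, ∀ ω,
      Y N (k + 1) ω = Y N k ω + (T / N) * ((η + σ ^ 2 / 2) * Y N k ω - lam * (Y N k ω) ^ 3)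
        + σ * Y N k ω * (W (((k : ℝ) + 1) * T / N) ω - W ((k : ℝ) * T / N) ω)) :
    ∀ p : ℝ, 1 ≤ p →
      Tendsto (fun N : ℕ => ∫⁻ ω, ENNReal.ofReal (|Y N N ω| ^ p) ∂(P : MeasureTheory.Measure Ω)) atTop (nhds ⊤) := by
  intro p hp
  set E := η + σ ^ 2 / 2
  set κ := (2 + (2 + T * E + σ) / (lam * T) + T * lam * x₀ ^ 3) / (σ * x₀)
  have hκ : 2 + (2 + T * E + σ) / (lam * T) + T * lam * x₀ ^ 3 ≤ σ * x₀ * κ := by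
    rw [mul_div_cancel₀ _ (by positivity)]
  have hbound : ∀ m : ℕ, T ≤ m + 1 → ENNReal.ofReal ((2 : ℝ) ^ 2 ^ m *
      (((√(2 * π))⁻¹ * exp (-1)) ^ (m + 1) * exp (-(κ ^ 2 / T) * ((m : ℝ) + 1) ^ 3))) ≤
      ∫⁻ ω, ENNReal.ofReal (|Y (m + 1) (m + 1) ω| ^ p) ∂P := fun m hm =>
    ofReal_le_lintegral_abs_euler_rpow hW hT (by positivity) hlam hσ hx₀ hκ hp hm
      (hY0 (m + 1) m.succ_pos) fun k hk ω => hYrec (m + 1) m.succ_pos k hk ω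
  rw [← tendsto_add_atTop_iff_nat 1]
  refine tendsto_nhds_top_mono (ENNReal.tendsto_ofReal_atTop.comp
    (tendsto_two_pow_two_pow_mul_exp_neg_cube (c := (√(2 * π))⁻¹ * exp (-1)) (by positivity)
      (κ ^ 2 / T))) ?_
  filter_upwards [eventually_ge_atTop ⌈T⌉₊] with m hm
  exact hbound m ((Nat.le_ceil T).trans (by exact_mod_cast hm.trans m.le_succ))

theorem stmt_17 {Ω : Type*} [MeasurableSpace Ω] (P : MeasureTheory.Measure Ω)
    [MeasureTheory.IsProbabilityMeasure P]
    (T : ℝ) (hT : 0 < T)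
    (η lam σ : ℝ) (hη : 0 ≤ η) (hlam : 0 < lam) (hσ : 0 < σ) (x₀ : ℝ) (hx₀ : 0 < x₀)
    (W : ℝ → Ω → ℝ) (hW : IsStandardBrownianMotion P T W)
    (Y : ℕ → ℕ → Ω → ℝ)
    (hY0 : ∀ N, 1 ≤ N → ∀ ω, Y N 0 ω = x₀)
    (hYrec : ∀ N, 1 ≤ N → ∀ k < N, ∀ ω,
      Y N (k + 1) ω = Y N k ω + (T / N) * ((η + σ ^ 2 / 2) * Y N k ω - lam * (Y N k ω) ^ 3)
        + σ * Y N k ω * (W (((k : ℝ) + 1) * T / N) ω - W ((k : ℝ) * T / N) ω)) :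
    ∀ p : ℝ, 1 ≤ p →
      Tendsto (fun N : ℕ => ∫⁻ ω, ENNReal.ofReal (|Y N N ω| ^ p) ∂(P : MeasureTheory.Measure Ω)) atTop (nhds ⊤) :=
  stmt_17_general P T hT η lam σ hη hlam hσ x₀ hx₀ W hW Y hY0 hYrec
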